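/- Invariant of the filter protocol: for every n > 0, every m ∈ ℕ, and every configuration γ reachable in F_n from ⟨s_0^m, 0⟩, it holds that for all j with 0 ≤ j ≤ min(m, n): Σ_{k=0}^{j} st(γ)(s_k) ≥ j + [data(γ) = j+1], where [·] is the indicator function. -/

import Mathlib

/-
The inequality is an inductive invariant of single steps. A step replaces one process `q` by `q'`
in `q ::ₘ ν`, so only the indicator `[q' ≤ j]` changes in `Σ_{k ≤ j} st(s_k)`. Self-loops change
nothing, and every write `(s_i, W, i, s_0)` moves a process down to `s_0`; if it writes `j + 1`, the
writer came from `s_{j+1}`, which pays for the new indicator. The only step lowering a sum is the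
read `(s_i, R, i, s_{i+1})` at `j = i`; there the register holds `i`, so the invariant at `i - 1`
already gave `Σ_{k < i} st(s_k) ≥ i`.
-/

/-- Operation type of a register protocol: read or write. -/
inductive Op : Type
  | R : Op
  | W : Op
deriving DecidableEq

instance instFintypeOp : Fintype Op :=
  ⟨{Op.R, Op.W}, fun x => by cases x <;> simp⟩

/-- A location has at least one outgoing transition. -/
def Nonblock {Q D : Type*} (T : Set (Q × Op × D × Q)) : Prop :=
  ∀ q : Q, ∃ op d q', (q, op, d, q') ∈ T

/-- Whenever a read transition exists from `q`, reads of every datum are enabled in `q`. -/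
def ReadTotal {Q D : Type*} (T : Set (Q × Op × D × Q)) : Prop :=
  ∀ q d' q', (q, Op.R, d', q') ∈ T → ∀ d : D, ∃ qd, (q, Op.R, d, qd) ∈ T

/-- One step of the distributed system associated with transition set `T`:
a configuration is a pair of a finite multiset of locations and a register datum. -/
def IsStep {Q D : Type*} [DecidableEq Q] (T : Set (Q × Op × D × Q)) :
    Multiset Q × D → Multiset Q × D → Prop := fun γ γ' =>
  ∃ q op d'' q', (q, op, d'', q') ∈ T ∧ q ∈ γ.1 ∧
    γ'.1 = γ.1 - {q} + {q'} ∧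
    ((op = Op.R ∧ γ.2 = d'' ∧ γ'.2 = d'') ∨ (op = Op.W ∧ γ'.2 = d''))

/-- Reachability: reflexive-transitive closure of the step relation. -/
def Reach {Q D : Type*} [DecidableEq Q] (T : Set (Q × Op × D × Q)) :
    Multiset Q × D → Multiset Q × D → Prop :=
  Relation.ReflTransGen (IsStep T)

/-- `PostStar T S` is the set of configurations reachable from some configuration of `S`. -/
def PostStar {Q D : Type*} [DecidableEq Q] (T : Set (Q × Op × D × Q))
    (S : Set (Multiset Q × D)) : Set (Multiset Q × D) :=
  {γ' | ∃ γ ∈ S, Reach T γ γ'}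

/-- `PreStar T S` is the set of configurations from which some configuration of `S`
is reachable. -/
def PreStar {Q D : Type*} [DecidableEq Q] (T : Set (Q × Op × D × Q))
    (S : Set (Multiset Q × D)) : Set (Multiset Q × D) :=
  {γ | ∃ γ' ∈ S, Reach T γ γ'}

/-- `[qf]`: configurations containing at least one process in location `qf`. -/
def TargetSet {Q D : Type*} [DecidableEq Q] (qf : Q) : Set (Multiset Q × D) :=
  {γ | 0 < γ.1.count qf}

/-- The order `⪯` on configurations: same register content, same support,
and componentwise smaller multiset. -/
def ConfLE {Q D : Type*} [DecidableEq Q] (γ γ' : Multiset Q × D) : Prop :=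
  γ.2 = γ'.2 ∧ γ.1.toFinset = γ'.1.toFinset ∧ γ.1 ≤ γ'.1

/-- Upward closure of a set of configurations with respect to `⪯`. -/
def UpSet {Q D : Type*} [DecidableEq Q] (B : Set (Multiset Q × D)) :
    Set (Multiset Q × D) :=
  {γ' | ∃ γ ∈ B, ConfLE γ γ'}

/-- Transitions of the filter protocol `F_n` (for `n > 0`): locations
`s_0, …, s_n` are `Fin (n+1)`, data `0, …, n−1` are `Fin n`. Transitions:
`(s_0, W, 0, s_0)`; `(s_i, R, i, s_{i+1})` for `0 ≤ i ≤ n−1`;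
`(s_i, W, i, s_0)` for `1 ≤ i ≤ n−1`; and read self-loops `(s, R, d, s)` for
every pair `(s, d)` for which no other read transition is specified. -/
def FilterT (n : ℕ) : Set (Fin (n + 1) × Op × Fin n × Fin (n + 1)) := fun t =>
  match t with
  | (s, Op.W, d, s') =>
      ((s : ℕ) = 0 ∧ (d : ℕ) = 0 ∧ (s' : ℕ) = 0) ∨
      (1 ≤ (s : ℕ) ∧ (s : ℕ) ≤ n - 1 ∧ (d : ℕ) = (s : ℕ) ∧ (s' : ℕ) = 0)
  | (s, Op.R, d, s') =>
      ((s : ℕ) ≤ n - 1 ∧ (d : ℕ) = (s : ℕ) ∧ (s' : ℕ) = (s : ℕ) + 1) ∨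
      (¬ ((s : ℕ) ≤ n - 1 ∧ (d : ℕ) = (s : ℕ)) ∧ s' = s)

lemma IsStep.exists_cons {Q D : Type*} [DecidableEq Q] {T : Set (Q × Op × D × Q)}
    {γ γ' : Multiset Q × D} (h : IsStep T γ γ') :
    ∃ q op d q' ν, (q, op, d, q') ∈ T ∧ γ.1 = q ::ₘ ν ∧ γ'.1 = q' ::ₘ ν ∧
      ((op = Op.R ∧ γ.2 = d ∧ γ'.2 = d) ∨ (op = Op.W ∧ γ'.2 = d)) := by
  obtain ⟨q, op, d, q', hT, hq, hμ, hdata⟩ := h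
  obtain ⟨ν, hν⟩ := Multiset.exists_cons_of_mem hq
  refine ⟨q, op, d, q', ν, hT, hν, ?_, hdata⟩
  rw [hμ, hν, Multiset.sub_singleton, Multiset.erase_cons_head, add_comm, Multiset.singleton_add]

namespace FilterT

variable {n : ℕ}

lemma read_cases {q q' : Fin (n + 1)} {d : Fin n} (h : (q, Op.R, d, q') ∈ FilterT n) :
    ((d : ℕ) = q ∧ (q' : ℕ) = q + 1) ∨ q' = q := by
  rcases h with ⟨-, hd, hq'⟩ | ⟨-, hq'⟩
  exacts [Or.inl ⟨hd, hq'⟩, Or.inr hq']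

lemma write_cases {q q' : Fin (n + 1)} {d : Fin n} (h : (q, Op.W, d, q') ∈ FilterT n) :
    (d : ℕ) = q ∧ (q' : ℕ) = 0 := by
  rcases h with ⟨hq, hd, hq'⟩ | ⟨-, -, hd, hq'⟩ <;> omega

def lowCount (μ : Multiset (Fin (n + 1))) (j : ℕ) : ℕ :=
  ∑ s ∈ Finset.univ.filter (fun s : Fin (n + 1) => (s : ℕ) ≤ j), μ.count s

lemma lowCount_cons (q : Fin (n + 1)) (ν : Multiset (Fin (n + 1))) (j : ℕ) :
    lowCount (q ::ₘ ν) j = (if (q : ℕ) ≤ j then 1 else 0) + lowCount ν j := by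
  simp only [lowCount, Multiset.count_cons, Finset.sum_add_distrib, Finset.sum_ite_eq',
    Finset.mem_filter, Finset.mem_univ, true_and]
  exact add_comm _ _

lemma lowCount_mono (μ : Multiset (Fin (n + 1))) {j j' : ℕ} (h : j ≤ j') :
    lowCount μ j ≤ lowCount μ j' :=
  Finset.sum_le_sum_of_subset fun s hs => by
    simp only [Finset.mem_filter, Finset.mem_univ, true_and] at hs ⊢
    omega

def Invariant (m : ℕ) (γ : Multiset (Fin (n + 1)) × Fin n) : Prop :=
  ∀ j : ℕ, j ≤ min m n →
    j + (if ((γ.2 : ℕ) = j + 1) then 1 else 0) ≤ lowCount γ.1 j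

lemma invariant_replicate_zero (hn : 0 < n) (m : ℕ) :
    Invariant m (Multiset.replicate m 0, ⟨0, hn⟩) := by
  intro j hj
  calc j + (if (0 : ℕ) = j + 1 then 1 else 0) = j := by simp
    _ ≤ (Multiset.replicate m (0 : Fin (n + 1))).count 0 := by
        simpa using hj.trans (min_le_left m n)
    _ ≤ _ := Finset.single_le_sum (f := fun s => (Multiset.replicate m 0).count s)
      (fun _ _ => Nat.zero_le _) (Finset.mem_filter.2 ⟨Finset.mem_univ _, Nat.zero_le _⟩)

variable {m : ℕ} {q q' : Fin (n + 1)} {ν : Multiset (Fin (n + 1))} {d d₀ : Fin n}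

lemma invariant_read_advance (hd : (d : ℕ) = q) (hq' : (q' : ℕ) = q + 1)
    (hI : Invariant m (q ::ₘ ν, d)) : Invariant m (q' ::ₘ ν, d) := by
  intro j hj
  have hIj := hI j hj
  simp only [lowCount_cons, hd, hq'] at hIj ⊢
  by_cases hjq : j = q
  · subst hjq
    obtain hq0 | hqpos := Nat.eq_zero_or_pos (q : ℕ)
    · simp [hq0]
    · have hIprev := hI (q - 1) (by omega)
      simp only [lowCount_cons, hd, if_pos (Nat.sub_add_cancel hqpos).symm,
        if_neg (show ¬ (q : ℕ) ≤ q - 1 by omega)] at hIprev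
      have := lowCount_mono ν (Nat.sub_le (q : ℕ) 1)
      simp only [if_neg (show ¬ (q : ℕ) + 1 ≤ q by omega)]
      split_ifs <;> omega
  · split_ifs at hIj ⊢ <;> omega

lemma invariant_write (hd : (d : ℕ) = q) (hq' : (q' : ℕ) = 0)
    (hI : Invariant m (q ::ₘ ν, d₀)) : Invariant m (q' ::ₘ ν, d) := by
  intro j hj
  have hIj := hI j hj
  simp only [lowCount_cons, hd, hq', Nat.zero_le, if_true] at hIj ⊢
  split_ifs at hIj ⊢ <;> omega

lemma invariant_of_isStep {γ γ' : Multiset (Fin (n + 1)) × Fin n}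
    (h : IsStep (FilterT n) γ γ') (hI : Invariant m γ) : Invariant m γ' := by
  obtain ⟨μ, e⟩ := γ
  obtain ⟨μ', e'⟩ := γ'
  obtain ⟨q, op, d, q', ν, hT, rfl, rfl, ⟨rfl, rfl, rfl⟩ | ⟨rfl, rfl⟩⟩ := h.exists_cons
  · rcases read_cases hT with ⟨hdq, hq'⟩ | rfl
    exacts [invariant_read_advance hdq hq' hI, hI]
  · exact invariant_write (write_cases hT).1 (write_cases hT).2 hI

end FilterT

open FilterT in
/-- invariant of the filter protocol: for every configuration `γ`
reachable in `F_n` from `⟨s_0^m, 0⟩` and every `j ≤ min m n`,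
`Σ_{k=0}^{j} st(γ)(s_k) ≥ j + [data(γ) = j+1]`. -/
theorem stmt_12 (n : ℕ) (hn : 0 < n) (m : ℕ)
    (γ : Multiset (Fin (n + 1)) × Fin n)
    (hreach : Reach (FilterT n)
      (Multiset.replicate m (⟨0, by omega⟩ : Fin (n + 1)), (⟨0, hn⟩ : Fin n)) γ) :
    ∀ j : ℕ, j ≤ min m n →
      j + (if ((γ.2 : ℕ) = j + 1) then 1 else 0) ≤
        ∑ s ∈ Finset.univ.filter (fun s : Fin (n + 1) => (s : ℕ) ≤ j),
          γ.1.count s := by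
  induction hreach with
  | refl => exact invariant_replicate_zero hn m
  | tail _ hstep ih => exact invariant_of_isStep hstep ih
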